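/- arXiv:1910.09921 — 3 statements merged into one kernel-verified Lean document; each statement's English description precedes it below -/
import Mathlib

section
/- Let ℓ ≥ 2 and p ≥ 3. For each i ∈ ℕ, let X_i = [4pℓ·i, 4pℓ·i + ℓ − 2] ⊆ ℤ. Then for i₁ ≠ i₂ the sets X_{i₁} and X_{i₂} are disjoint, and the union ⋃_{i=0}^{r−1} ⋃_{x ∈ X_i} {jℓ+1+x : j ∈ [0, 4p−1]} equals [1, 4pℓr] \ {jℓ : j ∈ [1, 4pr]}. -/
theorem support_union_8p (ℓ p r : ℤ) (hℓ : 2 ≤ ℓ) (hp : 3 ≤ p) (hr : 1 ≤ r) :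
    (∀ i₁ i₂ : ℕ, i₁ ≠ i₂ →
      Disjoint (Set.Icc (4 * p * ℓ * (i₁ : ℤ)) (4 * p * ℓ * (i₁ : ℤ) + ℓ - 2))
        (Set.Icc (4 * p * ℓ * (i₂ : ℤ)) (4 * p * ℓ * (i₂ : ℤ) + ℓ - 2))) ∧
    (⋃ i ∈ Set.Ico (0 : ℤ) r, ⋃ x ∈ Set.Icc (4 * p * ℓ * i) (4 * p * ℓ * i + ℓ - 2),
        {y : ℤ | ∃ j : ℤ, 0 ≤ j ∧ j ≤ 4 * p - 1 ∧ y = j * ℓ + 1 + x})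
      = Set.Icc 1 (4 * p * ℓ * r) \ {y : ℤ | ∃ j : ℤ, 1 ≤ j ∧ j ≤ 4 * p * r ∧ y = j * ℓ} := by
  have hℓ0 : (0:ℤ) < ℓ := by linarith
  have hp0 : (0:ℤ) < 4 * p := by linarith
  have hpl : (0:ℤ) ≤ 4 * p * ℓ := by positivity
  have hpl2 : 2 * ℓ ≤ 4 * p * ℓ := by nlinarith
  constructor
  · intro i₁ i₂ hne
    rw [Set.disjoint_left]
    rintro z ⟨h1, h2⟩ ⟨h3, h4⟩
    have hne' : (i₁ : ℤ) ≠ (i₂ : ℤ) := by exact_mod_cast hne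
    rcases lt_or_gt_of_ne hne' with h | h
    · have h' : (i₁ : ℤ) + 1 ≤ i₂ := h
      have := mul_le_mul_of_nonneg_left h' hpl
      nlinarith
    · have h' : (i₂ : ℤ) + 1 ≤ i₁ := h
      have := mul_le_mul_of_nonneg_left h' hpl
      nlinarith
  · ext y
    simp only [Set.mem_iUnion, Set.mem_Icc, Set.mem_Ico, Set.mem_diff, Set.mem_setOf_eq]
    constructor
    · rintro ⟨i, ⟨hi0, hir⟩, x, ⟨hx1, hx2⟩, j, hj0, hj1, rfl⟩
      have hir' : i + 1 ≤ r := hir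
      have h1 := mul_nonneg hj0 hℓ0.le
      have h2 := mul_nonneg hpl hi0
      have h3 := mul_le_mul_of_nonneg_right hj1 hℓ0.le
      have h4 := mul_le_mul_of_nonneg_left hir' hpl
      refine ⟨⟨by nlinarith, by nlinarith⟩, ?_⟩
      rintro ⟨k, hk1, hk2, hkeq⟩
      set m : ℤ := k - j - 4 * p * i with hm
      have hmeq : m * ℓ = x - 4 * p * ℓ * i + 1 := by linear_combination -hkeq
      rcases le_or_gt m 0 with hmle | hmlt
      · have := mul_nonneg (neg_nonneg.mpr hmle) hℓ0.le
        nlinarith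
      · have hm1 : 1 ≤ m := hmlt
        have := mul_le_mul_of_nonneg_right hm1 hℓ0.le
        nlinarith
    · rintro ⟨⟨hy1, hy2⟩, hnot⟩
      set q : ℤ := (y - 1) / ℓ with hq
      set s : ℤ := (y - 1) % ℓ with hs
      have hdm : ℓ * q + s = y - 1 := Int.mul_ediv_add_emod (y - 1) ℓ
      have hs0 : 0 ≤ s := Int.emod_nonneg _ (by linarith)
      have hsℓ : s < ℓ := Int.emod_lt_of_pos _ hℓ0
      have hq0 : 0 ≤ q := Int.ediv_nonneg (by linarith) hℓ0.le
      have hs2 : s ≤ ℓ - 2 := by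
        by_contra hc
        have hse : s = ℓ - 1 := by omega
        refine hnot ⟨q + 1, by linarith, ?_, by linarith⟩
        have h1 : (q + 1) * ℓ ≤ (4 * p * r) * ℓ := by linarith
        exact le_of_mul_le_mul_right h1 hℓ0
      have hq1 : q ≤ 4 * p * r - 1 := by
        have h1 : ℓ * q < ℓ * (4 * p * r) := by linarith
        have := lt_of_mul_lt_mul_left h1 hℓ0.le
        linarith
      set i : ℤ := q / (4 * p) with hi
      set j : ℤ := q % (4 * p) with hj
      have hdm2 : 4 * p * i + j = q := Int.mul_ediv_add_emod q (4 * p)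
      have hj0 : 0 ≤ j := Int.emod_nonneg _ (by linarith)
      have hjp : j < 4 * p := Int.emod_lt_of_pos _ hp0
      have hi0 : 0 ≤ i := Int.ediv_nonneg hq0 hp0.le
      have hir : i < r := by
        have h1 : (4 * p) * i < (4 * p) * r := by linarith
        exact lt_of_mul_lt_mul_left h1 hp0.le
      refine ⟨i, ⟨hi0, hir⟩, 4 * p * ℓ * i + s, ⟨by linarith, by linarith⟩,
        j, hj0, by linarith, by linear_combination -hdm - ℓ * hdm2⟩
end

section
/- Let p be an odd prime, y ≥ 1, and set ℓ = py + 1. Then the set {iy + 1 + jℓ : i ∈ [0, p−1], j ∈ [0, 3]} together with its translates by x ∈ [0, y−1] covers exactly [1, 4ℓ] \ {ℓ, 2ℓ, 3ℓ, 4ℓ}; that is, ⋃_{x=0}^{y−1} {iy + 1 + x + jℓ : i ∈ [0,p−1], j ∈ [0,3]} = [1, 4ℓ] \ {ℓ, 2ℓ, 3ℓ, 4ℓ}, and the translates for distinct x are pairwise disjoint. -/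
private lemma aux_d_zero (d L : ℤ) (hL : 0 < L) (h1 : -L < d * L) (h2 : d * L < L) :
    d = 0 := by
  by_contra hd
  rcases lt_or_gt_of_ne hd with h | h
  · nlinarith
  · nlinarith

theorem support_union_non8p (p : ℕ) (hp : p.Prime) (hodd : Odd p) (y : ℤ) (hy : 1 ≤ y) :
    (⋃ x ∈ Set.Icc (0 : ℤ) (y - 1),
        {z : ℤ | ∃ i j : ℤ, 0 ≤ i ∧ i ≤ (p : ℤ) - 1 ∧ 0 ≤ j ∧ j ≤ 3 ∧
          z = i * y + 1 + x + j * ((p : ℤ) * y + 1)})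
      = Set.Icc 1 (4 * ((p : ℤ) * y + 1)) \
          {(p : ℤ) * y + 1, 2 * ((p : ℤ) * y + 1), 3 * ((p : ℤ) * y + 1),
            4 * ((p : ℤ) * y + 1)} ∧
    ∀ x₁ ∈ Set.Icc (0 : ℤ) (y - 1), ∀ x₂ ∈ Set.Icc (0 : ℤ) (y - 1), x₁ ≠ x₂ →
      Disjoint
        {z : ℤ | ∃ i j : ℤ, 0 ≤ i ∧ i ≤ (p : ℤ) - 1 ∧ 0 ≤ j ∧ j ≤ 3 ∧
          z = i * y + 1 + x₁ + j * ((p : ℤ) * y + 1)}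
        {z : ℤ | ∃ i j : ℤ, 0 ≤ i ∧ i ≤ (p : ℤ) - 1 ∧ 0 ≤ j ∧ j ≤ 3 ∧
          z = i * y + 1 + x₂ + j * ((p : ℤ) * y + 1)} := by
  have hp2 : (2 : ℤ) ≤ (p : ℤ) := by exact_mod_cast hp.two_le
  set L : ℤ := (p : ℤ) * y + 1 with hLdef
  have hL : 0 < L := by nlinarith
  constructor
  · ext z
    simp only [Set.mem_iUnion, Set.mem_setOf_eq, Set.mem_Icc, Set.mem_diff,
      Set.mem_insert_iff, Set.mem_singleton_iff]
    constructor
    · rintro ⟨x, ⟨hx0, hx1⟩, i, j, hi0, hi1, hj0, hj1, rfl⟩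
      have hiy0 : 0 ≤ i * y := mul_nonneg hi0 (by linarith)
      have hiy1 : i * y ≤ (p : ℤ) * y - y := by nlinarith
      have hjL0 : 0 ≤ j * L := mul_nonneg hj0 hL.le
      have hjL1 : j * L ≤ 3 * L := by nlinarith
      refine ⟨⟨by linarith, by linarith⟩, ?_⟩
      have key : ∀ k : ℤ, i * y + 1 + x + j * L ≠ k * L := by
        intro k hk
        have hd : (k - j) * L = i * y + x + 1 := by linarith [hk]
        have : k - j = 0 := by
          apply aux_d_zero _ _ hL
          · nlinarith
          · nlinarith
        nlinarith
      push_neg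
      refine ⟨by simpa using key 1, by simpa using key 2, by simpa using key 3,
        by simpa using key 4⟩
    · rintro ⟨⟨hz1, hz2⟩, hzne⟩
      push_neg at hzne
      obtain ⟨hne1, hne2, hne3, hne4⟩ := hzne
      set j : ℤ := (z - 1) / L with hjdef
      set r : ℤ := (z - 1) % L with hrdef
      have hdm : L * j + r = z - 1 := Int.mul_ediv_add_emod (z - 1) L
      have hr0 : 0 ≤ r := Int.emod_nonneg _ (ne_of_gt hL)
      have hrL : r < L := Int.emod_lt_of_pos _ hL
      have hj0 : 0 ≤ j := Int.ediv_nonneg (by linarith) hL.le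
      have hj3 : j ≤ 3 := by
        by_contra h
        push_neg at h
        have : 4 ≤ j := by linarith
        nlinarith
      have hr2 : r ≤ L - 2 := by
        by_contra h
        push_neg at h
        have hre : r = L - 1 := by linarith
        have hze : z = L * (j + 1) := by linarith
        interval_cases j
        · exact hne1 (by linarith)
        · exact hne2 (by linarith)
        · exact hne3 (by linarith)
        · exact hne4 (by linarith)
      set x : ℤ := r % y with hxdef
      set i : ℤ := r / y with hidef
      have hdm2 : y * i + x = r := Int.mul_ediv_add_emod r y
      have hx0 : 0 ≤ x := Int.emod_nonneg _ (by linarith)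
      have hxy : x < y := Int.emod_lt_of_pos _ (by linarith)
      have hi0 : 0 ≤ i := Int.ediv_nonneg hr0 (by linarith)
      have hip : i ≤ (p : ℤ) - 1 := by
        by_contra h
        push_neg at h
        have : (p : ℤ) ≤ i := by linarith
        nlinarith
      exact ⟨x, ⟨hx0, by linarith⟩, i, j, hi0, hip, hj0, hj3, by linarith⟩
  · intro x₁ hx₁ x₂ hx₂ hne
    simp only [Set.mem_Icc] at hx₁ hx₂
    rw [Set.disjoint_left]
    rintro z ⟨i₁, j₁, hi₁0, hi₁1, hj₁0, hj₁1, rfl⟩ ⟨i₂, j₂, hi₂0, hi₂1, hj₂0, hj₂1, heq⟩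
    have hb : ∀ i x : ℤ, 0 ≤ i → i ≤ (p : ℤ) - 1 → 0 ≤ x → x ≤ y - 1 →
        0 ≤ i * y + x ∧ i * y + x ≤ L - 2 := by
      intro i x h1 h2 h3 h4
      constructor
      · nlinarith
      · nlinarith
    obtain ⟨hr₁0, hr₁1⟩ := hb i₁ x₁ hi₁0 hi₁1 hx₁.1 hx₁.2
    obtain ⟨hr₂0, hr₂1⟩ := hb i₂ x₂ hi₂0 hi₂1 hx₂.1 hx₂.2
    have hjj : j₁ - j₂ = 0 := by
      apply aux_d_zero _ _ hL
      · nlinarith [heq]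
      · nlinarith [heq]
    have hj : j₁ = j₂ := by linarith
    subst hj
    have heq' : i₁ * y + x₁ = i₂ * y + x₂ := by linarith
    have hii : i₁ - i₂ = 0 := by
      apply aux_d_zero _ _ (show (0:ℤ) < y by linarith)
      · linarith
      · linarith
    have hieq : i₁ = i₂ := by linarith
    subst hieq
    exact hne (by linarith)
end

section
/- Suppose d, a are positive integers with 1 ≤ 2a ≤ d, and B₁, …, B_d are 2×2a integer matrices all having the same column-sum pattern: there are integers σ₁, …, σ_a such that for every r, column 2i−1 of B_r sums to σ_i and column 2i of B_r sums to −σ_i (for all i ∈ [1, a]). Form the 2d×d array P where for r ∈ [1,d], row r of P places the first row of B_r in cells (r, r), (r, r+1), …, (r, r+2a−1) (column indices mod d), and row d+r places the second row of B_r in the same columns. Then every column of P sums to 0. -/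
theorem P_column_sums_zero (d a : ℕ) (hd : 0 < d) (ha : 0 < a) (h2a : 2 * a ≤ d)
    (B : Fin d → Fin 2 → Fin (2 * a) → ℤ) (σ : Fin a → ℤ)
    (hB : ∀ r : Fin d, ∀ i : Fin a,
      B r 0 ⟨2 * i, by have := i.isLt; omega⟩ + B r 1 ⟨2 * i, by have := i.isLt; omega⟩ = σ i ∧
      B r 0 ⟨2 * i + 1, by have := i.isLt; omega⟩ +
        B r 1 ⟨2 * i + 1, by have := i.isLt; omega⟩ = -σ i) :
    ∀ c : ZMod d, ∑ r : Fin d, ∑ i : Fin 2, ∑ j : Fin (2 * a),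
      (if c = (r : ZMod d) + (j : ZMod d) then B r i j else 0) = 0 := by
  intro c
  haveI : NeZero d := ⟨hd.ne'⟩
  rw [Finset.sum_comm]
  set F : Fin (2*a) → Fin d := fun j => ⟨(c - (j : ZMod d)).val, ZMod.val_lt _⟩ with hF
  have key : ∀ i : Fin 2, ∀ j : Fin (2*a),
      ∑ r : Fin d, (if c = (r : ZMod d) + (j : ZMod d) then B r i j else 0) = B (F j) i j := by
    intro i j
    rw [Finset.sum_eq_single (F j)]
    · rw [if_pos]
      simp only [hF]
      rw [ZMod.natCast_val, ZMod.cast_id]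
      ring
    · intro r _ hr
      rw [if_neg]
      intro hc
      apply hr
      have hrc : c - (j : ZMod d) = ((r : ℕ) : ZMod d) := by rw [hc]; ring
      apply Fin.ext
      simp only [hF, hrc, ZMod.val_natCast_of_lt r.isLt]
    · intro h; exact absurd (Finset.mem_univ _) h
  have step1 : ∀ i : Fin 2, ∑ j : Fin (2*a), ∑ r : Fin d,
      (if c = (r : ZMod d) + (j : ZMod d) then B r i j else 0) = ∑ j : Fin (2*a), B (F j) i j :=
    fun i => Finset.sum_congr rfl fun j _ => key i j
  have step2 : ∑ i : Fin 2, ∑ r : Fin d, ∑ j : Fin (2*a),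
      (if c = (r : ZMod d) + (j : ZMod d) then B r i j else 0)
      = ∑ j : Fin (2*a), (B (F j) 0 j + B (F j) 1 j) := by
    rw [Fin.sum_univ_two, Finset.sum_comm (γ := Fin d), Finset.sum_comm (γ := Fin d),
      step1 0, step1 1, ← Finset.sum_add_distrib]
  rw [step2]
  have hbij : Function.Bijective
      (fun p : Fin a × Fin 2 => (⟨2*p.1+p.2, by have := p.1.isLt; have := p.2.isLt; omega⟩ :
        Fin (2*a))) := by
    rw [Fintype.bijective_iff_injective_and_card]
    constructor
    · rintro ⟨i1, k1⟩ ⟨i2, k2⟩ h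
      simp only [Fin.mk.injEq] at h
      have hk1 := k1.isLt; have hk2 := k2.isLt
      have : (i1 : ℕ) = i2 ∧ (k1 : ℕ) = k2 := by omega
      exact Prod.ext (Fin.ext this.1) (Fin.ext this.2)
    · simp [mul_comm]
  rw [← Fintype.sum_bijective _ hbij _ _ (fun p => rfl), Fintype.sum_prod_type]
  have inner : ∀ i : Fin a, ∑ k : Fin 2,
      (B (F ⟨2*i+k, by have := i.isLt; have := k.isLt; omega⟩) 0 ⟨2*i+k, by have := i.isLt; have := k.isLt; omega⟩
       + B (F ⟨2*i+k, by have := i.isLt; have := k.isLt; omega⟩) 1 ⟨2*i+k, by have := i.isLt; have := k.isLt; omega⟩) = 0 := by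
    intro i
    rw [Fin.sum_univ_two]
    have e1 : (⟨2*(i:ℕ)+((0:Fin 2):ℕ), by have := i.isLt; omega⟩ : Fin (2*a)) = ⟨2*i, by have := i.isLt; omega⟩ := by simp
    have e2 : (⟨2*(i:ℕ)+((1:Fin 2):ℕ), by have := i.isLt; omega⟩ : Fin (2*a)) = ⟨2*i+1, by have := i.isLt; omega⟩ := by simp
    rw [e1, e2, (hB _ i).1, (hB _ i).2]
    ring
  exact Finset.sum_eq_zero fun i _ => inner i
end
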